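/- Let G be a finite simple graph on vertex set V = Fin n (n ≥ 1) with edge set E, and let k be an integer with 1 ≤ k ≤ n. Consider the classifier M over the n + 2 features {x₀} ∪ V ∪ {w}, where x₀ is feature 0, the nodes of G are features 1,…,n, and w is feature n+1, defined by: M accepts an entity e if and only if either (i) there is an edge {u,v} ∈ E such that e(x₀) = e(u) = e(v) = true and e is false on all other features (including w), or (ii) e(x₀) = e(w) = true and e(v) = false for every node v ∈ V. Let e₀ be the entity assigning false to all features, let c_j := j!·(n+1−j)!/(n+2)! be the Shapley coefficients for n+2 features, let ε := c_{n−1} / (Σ_{i=0}^{k} (k choose i) · c_{n−i}), and let q := −c_{n−1}. Let 𝓘 be the hyperrectangle of vectors p with p(x₀) = 1, p(w) = ε, and 0 ≤ p(v) ≤ 1 for every node v. Then G has a vertex cover of size at most k if and only if there exists p ∈ 𝓘 with Shap(M,e₀,x₀,p) ≥ q. -/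

import Mathlib

/-!
Only entities with `x₀` true are accepted, so the `S ∪ {x₀}` terms of the SHAP score vanish and
`Shap(M, e₀, x₀, p) = -∑_S c_|S| φ(S)`. This is affine in each `p v`, so over the box it is
maximised where every node probability is `0` or `1`, i.e. at the indicator of a node set `D`.
There an entity is determined up to `w`, and the score becomes
`-(ε ∑_{T ⊇ D} c_|T| + R)`, where `R` collects the sets `T` for which `D \ T` is an edge.
If `D` is independent then `R = 0` and `∑_{T ⊇ D} c_|T| = F(n - |D|)` with `F` increasing and
`ε F(k) = c_{n-1}`: the bound `-c_{n-1}` holds iff the cover `Dᶜ` has at most `k` nodes.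
If `D` contains an edge `uv`, the set `T = V \ {u, v}` alone contributes `c_{n-1}` to `R`.
-/

/-- The conditional expectation `φ(M,e,S,p)` of the classifier `M` given that the
entity agrees with `e` on `S`, under the product distribution with parameters `p`. -/
noncomputable def phi {m : ℕ} (M : (Fin m → Bool) → Bool) (e : Fin m → Bool)
    (S : Finset (Fin m)) (p : Fin m → ℝ) : ℝ :=
  ∑ e' ∈ Finset.univ.filter (fun e' : Fin m → Bool => ∀ i ∈ S, e' i = e i),
    (∏ i ∈ Sᶜ, (if e' i = true then p i else 1 - p i)) *
      (if M e' = true then (1 : ℝ) else 0)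

/-- The SHAP score of feature `x` for classifier `M` and entity `e`, under the
product distribution with parameters `p` (with `m` features the coefficients are
`c_{j,m} = j! (m - j - 1)! / m!`). -/
noncomputable def Shap {m : ℕ} (M : (Fin m → Bool) → Bool) (e : Fin m → Bool)
    (x : Fin m) (p : Fin m → ℝ) : ℝ :=
  ∑ S ∈ ({x}ᶜ : Finset (Fin m)).powerset,
    ((S.card.factorial * (m - S.card - 1).factorial : ℝ) / m.factorial) *
      (phi M e (insert x S) p - phi M e S p)

/-- The feature (in `Fin (n+2)`) corresponding to the node `v : Fin n` of the graph:
feature `0` is `x₀`, the nodes occupy features `1, …, n`, and `Fin.last (n+1)` is `w`. -/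
abbrev nodeFeature {n : ℕ} (v : Fin n) : Fin (n + 2) := v.succ.castSucc

open Finset Function

theorem Finset.sum_powerset_map {α β M : Type*} [AddCommMonoid M] (f : α ↪ β) (s : Finset α)
    (g : Finset β → M) : ∑ t ∈ (s.map f).powerset, g t = ∑ t ∈ s.powerset, g (t.map f) := by
  refine (sum_bij (fun t _ => t.map f) (fun t ht => ?_) (fun t _ t' _ => map_inj.1)
    (fun t ht => ?_) fun _ _ => rfl).symm
  · exact mem_powerset.2 (map_subset_map.2 (mem_powerset.1 ht))
  · obtain ⟨u, hu, rfl⟩ := subset_map_iff.1 (mem_powerset.1 ht)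
    exact ⟨u, mem_powerset.2 hu, rfl⟩

section Multiaffine

variable {ι : Type*} [DecidableEq ι]

def IsMultiaffine (f : (ι → ℝ) → ℝ) : Prop :=
  ∀ p i t, f (update p i t) = (1 - t) * f (update p i 0) + t * f (update p i 1)

theorem IsMultiaffine.exists_update_le {f : (ι → ℝ) → ℝ} (hf : IsMultiaffine f)
    (p : ι → ℝ) {i : ι} (hi : p i ∈ Set.Icc 0 1) :
    ∃ b : ℝ, (b = 0 ∨ b = 1) ∧ f p ≤ f (update p i b) := by
  have hp := hf p i (p i)
  rw [update_eq_self] at hp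
  obtain ⟨h0, h1⟩ := hi
  by_cases h : f (update p i 0) ≤ f (update p i 1)
  · exact ⟨1, Or.inr rfl, by nlinarith⟩
  · exact ⟨0, Or.inl rfl, by nlinarith⟩

theorem IsMultiaffine.exists_le_of_mem_Icc {f : (ι → ℝ) → ℝ} (hf : IsMultiaffine f)
    (s : Finset ι) (p : ι → ℝ) (hp : ∀ i ∈ s, p i ∈ Set.Icc 0 1) :
    ∃ q : ι → ℝ, (∀ i ∉ s, q i = p i) ∧ (∀ i ∈ s, q i = 0 ∨ q i = 1) ∧ f p ≤ f q := by
  induction s using Finset.induction_on with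
  | empty => exact ⟨p, fun _ _ => rfl, by simp, le_rfl⟩
  | @insert a s ha ih =>
    obtain ⟨q, hq_off, hq_on, hpq⟩ := ih fun i hi => hp i (mem_insert_of_mem hi)
    have hqa : q a = p a := hq_off a ha
    obtain ⟨b, hb, hqb⟩ := hf.exists_update_le q (hqa ▸ hp a (mem_insert_self a s))
    refine ⟨update q a b, fun i hi => ?_, fun i hi => ?_, hpq.trans hqb⟩
    · rw [update_of_ne (ne_of_mem_of_not_mem (mem_insert_self a s) hi).symm]
      exact hq_off i fun h => hi (mem_insert_of_mem h)
    · rcases eq_or_ne i a with rfl | hia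
      · rwa [update_self]
      · rw [update_of_ne hia]
        exact hq_on i ((mem_insert.1 hi).resolve_left hia)

end Multiaffine

section Phi

variable {m : ℕ} (M : (Fin m → Bool) → Bool)

theorem phi_congr (e : Fin m → Bool) (S : Finset (Fin m)) {p q : Fin m → ℝ}
    (h : ∀ i ∉ S, p i = q i) : phi M e S p = phi M e S q := by
  refine sum_congr rfl fun e' _ => ?_
  congr 1
  exact prod_congr rfl fun i hi => by rw [h i (mem_compl.1 hi)]

theorem phi_eq_zero (e : Fin m → Bool) (S : Finset (Fin m)) (p : Fin m → ℝ)
    (h : ∀ e', (∀ i ∈ S, e' i = e i) → M e' = false) : phi M e S p = 0 :=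
  sum_eq_zero fun e' he' => by simp [h e' (mem_filter.1 he').2]

/-- The law of total probability. -/
theorem phi_eq_add_of_notMem (e : Fin m → Bool) {S : Finset (Fin m)} (p : Fin m → ℝ)
    {i : Fin m} (hi : i ∉ S) :
    phi M e S p = p i * phi M (update e i true) (insert i S) p
      + (1 - p i) * phi M (update e i false) (insert i S) p := by
  have hagree : ∀ (e' : Fin m → Bool) (b : Bool),
      (∀ j ∈ insert i S, e' j = update e i b j) ↔ e' i = b ∧ ∀ j ∈ S, e' j = e j := by
    intro e' b
    rw [forall_mem_insert, update_self]
    refine and_congr_right fun _ => forall₂_congr fun j hj => ?_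
    rw [update_of_ne (ne_of_mem_of_not_mem hj hi)]
  simp only [phi, sum_filter, mul_sum, ← sum_add_distrib, compl_insert]
  refine sum_congr rfl fun e' _ => ?_
  rw [← mul_prod_erase Sᶜ _ (mem_compl.2 hi)]
  simp only [hagree]
  by_cases hS : ∀ j ∈ S, e' j = e j <;> cases e' i <;> simp [hS]

theorem isMultiaffine_phi (e : Fin m → Bool) (S : Finset (Fin m)) :
    IsMultiaffine (phi M e S) := by
  intro p i t
  by_cases hi : i ∈ S
  · have h : ∀ s, phi M e S (update p i s) = phi M e S p := fun s =>
      phi_congr M e S fun j hj => update_of_ne (ne_of_mem_of_not_mem hi hj).symm _ _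
    rw [h, h, h]
    ring
  · have h : ∀ b s, phi M (update e i b) (insert i S) (update p i s)
        = phi M (update e i b) (insert i S) p := fun b s =>
      phi_congr M _ _ fun j hj =>
        update_of_ne (ne_of_mem_of_not_mem (mem_insert_self i S) hj).symm _ _
    simp only [phi_eq_add_of_notMem M e _ hi, h, update_self]
    ring

theorem isMultiaffine_shap (e : Fin m → Bool) (x : Fin m) : IsMultiaffine (Shap M e x) := by
  intro p i t
  simp only [Shap, mul_sum, ← sum_add_distrib]
  refine sum_congr rfl fun S _ => ?_
  rw [isMultiaffine_phi M e (insert x S) p i t, isMultiaffine_phi M e S p i t]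
  ring

theorem phi_eq_ite_of_forall_notMem (e f : Fin m → Bool) (S : Finset (Fin m))
    (p : Fin m → ℝ) (hp : ∀ i ∉ S, p i = if f i then 1 else 0) :
    phi M e S p = if M (S.piecewise e f) then 1 else 0 := by
  have hfactor : ∀ (e' : Fin m → Bool) (i : Fin m), i ∉ S →
      (if e' i then p i else 1 - p i) = if e' i = f i then 1 else 0 := by
    intro e' i hi
    rw [hp i hi]
    cases e' i <;> cases f i <;> simp
  rw [phi, sum_eq_single_of_mem (S.piecewise e f)]
  · rw [prod_eq_one fun i hi => ?_, one_mul]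
    rw [hfactor _ i (mem_compl.1 hi), piecewise_eq_of_notMem _ _ _ (mem_compl.1 hi), if_pos rfl]
  · exact mem_filter.2 ⟨mem_univ _, fun i hi => piecewise_eq_of_mem _ _ _ hi⟩
  · intro e' he' hne
    obtain ⟨i, hi⟩ : ∃ i, e' i ≠ S.piecewise e f i := by
      by_contra! h
      exact hne (funext h)
    have hiS : i ∉ S := fun hiS => hi (by
      rw [piecewise_eq_of_mem _ _ _ hiS]; exact (mem_filter.1 he').2 i hiS)
    rw [piecewise_eq_of_notMem _ _ _ hiS] at hi
    rw [prod_eq_zero (mem_compl.2 hiS) (by rw [hfactor _ i hiS, if_neg hi]), zero_mul]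

end Phi

section Features

variable {n : ℕ}

theorem nodeFeature_injective : Injective (nodeFeature (n := n)) :=
  (Fin.castSucc_injective _).comp (Fin.succ_injective _)

theorem nodeFeature_ne_zero (v : Fin n) : nodeFeature v ≠ 0 :=
  Fin.castSucc_ne_zero_iff.2 (Fin.succ_ne_zero v)

theorem nodeFeature_ne_last (v : Fin n) : nodeFeature v ≠ Fin.last (n + 1) :=
  (Fin.castSucc_lt_last _).ne

theorem forall_features_iff {P : Fin (n + 2) → Prop} :
    (∀ i, P i) ↔ P 0 ∧ P (Fin.last (n + 1)) ∧ ∀ v, P (nodeFeature v) := by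
  refine ⟨fun h => ⟨h 0, h _, fun v => h _⟩, fun ⟨h0, hlast, hv⟩ i => ?_⟩
  induction i using Fin.lastCases with
  | last => exact hlast
  | cast j => induction j using Fin.cases with
    | zero => exact h0
    | succ v => exact hv v

def nodeEmb (n : ℕ) : Fin n ↪ Fin (n + 2) := ⟨nodeFeature, nodeFeature_injective⟩

theorem nodeFeature_mem_map_nodeEmb {T : Finset (Fin n)} {v : Fin n} :
    nodeFeature v ∈ T.map (nodeEmb n) ↔ v ∈ T :=
  mem_map' (nodeEmb n)

theorem zero_notMem_map_nodeEmb (T : Finset (Fin n)) : (0 : Fin (n + 2)) ∉ T.map (nodeEmb n) := by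
  simp [nodeEmb]

theorem last_notMem_map_nodeEmb (T : Finset (Fin n)) : Fin.last (n + 1) ∉ T.map (nodeEmb n) := by
  simp [nodeEmb]

theorem compl_singleton_zero_eq :
    ({0}ᶜ : Finset (Fin (n + 2))) = insert (Fin.last (n + 1)) (univ.map (nodeEmb n)) := by
  ext i
  simp only [mem_compl, mem_singleton, mem_insert]
  revert i
  rw [forall_features_iff]
  refine ⟨iff_of_false (not_not.2 rfl) ?_, iff_of_true Fin.last_pos.ne' (Or.inl rfl), fun v =>
    iff_of_true (nodeFeature_ne_zero v) (Or.inr (nodeFeature_mem_map_nodeEmb.2 (mem_univ v)))⟩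
  rintro (h | h)
  exacts [Fin.last_pos.ne h, zero_notMem_map_nodeEmb _ h]

/-- `x₀` true, the nodes in `A` true, the other nodes false, and `w` equal to `b`. -/
def entityOf (A : Finset (Fin n)) (b : Bool) : Fin (n + 2) → Bool :=
  Fin.snoc (α := fun _ => Bool) (Fin.cons true fun v => decide (v ∈ A)) b

theorem entityOf_zero (A : Finset (Fin n)) (b : Bool) : entityOf A b 0 = true := rfl

theorem entityOf_last (A : Finset (Fin n)) (b : Bool) : entityOf A b (Fin.last (n + 1)) = b :=
  Fin.snoc_last (α := fun _ => Bool) _ _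

theorem entityOf_nodeFeature (A : Finset (Fin n)) (b : Bool) (v : Fin n) :
    entityOf A b (nodeFeature v) = decide (v ∈ A) := by
  rw [entityOf, nodeFeature, Fin.snoc_castSucc (α := fun _ => Bool), Fin.cons_succ]

end Features

section Region

variable {n : ℕ}

/-- The vertex of the region `𝓘` at which exactly the nodes of `D` have probability `1`. -/
structure IsRegionVertex (ε : ℝ) (D : Finset (Fin n)) (p : Fin (n + 2) → ℝ) : Prop where
  zero : p 0 = 1
  last : p (Fin.last (n + 1)) = ε
  node : ∀ v, p (nodeFeature v) = if v ∈ D then 1 else 0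

theorem exists_isRegionVertex (ε : ℝ) (D : Finset (Fin n)) : ∃ p, IsRegionVertex ε D p := by
  refine ⟨Fin.snoc (α := fun _ => ℝ) (Fin.cons 1 fun v => if v ∈ D then 1 else 0) ε,
    rfl, Fin.snoc_last (α := fun _ => ℝ) _ _, fun v => ?_⟩
  rw [nodeFeature, Fin.snoc_castSucc (α := fun _ => ℝ), Fin.cons_succ]

theorem IsMultiaffine.exists_isRegionVertex_le {f : (Fin (n + 2) → ℝ) → ℝ} (hf : IsMultiaffine f)
    {ε : ℝ} {p : Fin (n + 2) → ℝ} (hp0 : p 0 = 1) (hpw : p (Fin.last (n + 1)) = ε)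
    (hp : ∀ v, 0 ≤ p (nodeFeature v) ∧ p (nodeFeature v) ≤ 1) :
    ∃ D q, IsRegionVertex ε D q ∧ f p ≤ f q := by
  obtain ⟨q, hq_off, hq_on, hpq⟩ :=
    hf.exists_le_of_mem_Icc (univ.map (nodeEmb n)) p (forall_mem_map.2 fun v _ => hp v)
  refine ⟨univ.filter fun v => q (nodeFeature v) = 1, q,
    ⟨(hq_off 0 (zero_notMem_map_nodeEmb _)).trans hp0,
      (hq_off _ (last_notMem_map_nodeEmb _)).trans hpw, fun v => ?_⟩, hpq⟩
  rcases hq_on _ (nodeFeature_mem_map_nodeEmb.2 (mem_univ v)) with h | h <;>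
    simp only [mem_filter, mem_univ, true_and, h] <;> norm_num

end Region

section Classifier

variable {n : ℕ} {G : SimpleGraph (Fin n)} {M : (Fin (n + 2) → Bool) → Bool}

def IsVertexCoverClassifier (G : SimpleGraph (Fin n)) (M : (Fin (n + 2) → Bool) → Bool) : Prop :=
  ∀ e : Fin (n + 2) → Bool, M e = true ↔
    ((∃ u v : Fin n, G.Adj u v ∧
        e 0 = true ∧ e (nodeFeature u) = true ∧ e (nodeFeature v) = true ∧
        ∀ j : Fin (n + 2), j ≠ 0 → j ≠ nodeFeature u → j ≠ nodeFeature v → e j = false) ∨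
      (e 0 = true ∧ e (Fin.last (n + 1)) = true ∧ ∀ v : Fin n, e (nodeFeature v) = false))

namespace IsVertexCoverClassifier

theorem apply_zero_of_apply {e : Fin (n + 2) → Bool} (hM : IsVertexCoverClassifier G M)
    (he : M e = true) : e 0 = true := by
  rcases (hM e).1 he with ⟨_, _, _, h, _⟩ | ⟨h, _⟩ <;> exact h

theorem apply_entityOf_true (hM : IsVertexCoverClassifier G M) (A : Finset (Fin n)) :
    M (entityOf A true) = true ↔ A = ∅ := by
  have hlast : ∀ u v : Fin n, ¬ ∀ j : Fin (n + 2),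
      j ≠ 0 → j ≠ nodeFeature u → j ≠ nodeFeature v → entityOf A true j = false :=
    fun u v h => Bool.true_eq_false.mp <| (entityOf_last A true).symm.trans <|
      h _ Fin.last_pos.ne' (nodeFeature_ne_last u).symm (nodeFeature_ne_last v).symm
  rw [hM, eq_empty_iff_forall_notMem]
  simp only [hlast, and_false, exists_false, false_or, entityOf_zero, entityOf_last,
    entityOf_nodeFeature, decide_eq_false_iff_not, true_and]

theorem apply_entityOf_false (hM : IsVertexCoverClassifier G M) (A : Finset (Fin n)) :
    M (entityOf A false) = true ↔ ∃ u v : Fin n, G.Adj u v ∧ A = {u, v} := by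
  rw [hM]
  simp only [entityOf_zero, entityOf_last, entityOf_nodeFeature, decide_eq_true_eq,
    true_and, Bool.false_eq_true, false_and, or_false]
  refine exists₂_congr fun u v => and_congr_right fun _ => ?_
  rw [forall_features_iff]
  simp only [entityOf_zero, entityOf_last, entityOf_nodeFeature, ne_eq, not_true, false_imp_iff,
    implies_true, true_and, decide_eq_false_iff_not, nodeFeature_injective.eq_iff,
    nodeFeature_ne_zero, not_false_eq_true, true_imp_iff, Finset.ext_iff, mem_insert,
    mem_singleton]
  grind

end IsVertexCoverClassifier

end Classifier

section SupersetWeight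

/-- The total weight `∑ c |T|` of the supersets `T` of a set whose complement in an `n`-element
type has `m` elements, grouped by `i = n - |T|`. -/
def supersetWeight (c : ℕ → ℝ) (n m : ℕ) : ℝ :=
  ∑ i ∈ range (m + 1), (m.choose i : ℝ) * c (n - i)

theorem sum_ite_subset_eq_supersetWeight {α : Type*} [Fintype α] [DecidableEq α]
    (c : ℕ → ℝ) (D : Finset α) :
    ∑ T : Finset α, (if D ⊆ T then c T.card else 0)
      = supersetWeight c (Fintype.card α) Dᶜ.card := by
  rw [← Equiv.sum_comp (compl_involutive.toPerm _)]
  simp only [Involutive.coe_toPerm, subset_compl_comm (s := D)]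
  rw [← sum_filter, filter_subset_univ]
  simp only [card_compl]
  rw [sum_powerset_apply_card (fun j => c (Fintype.card α - j))]
  simp [supersetWeight, card_compl]

variable {c : ℕ → ℝ} (hc : ∀ j, 0 < c j) (n : ℕ)
include hc

theorem supersetWeight_strictMono : StrictMono (supersetWeight c n) := by
  refine strictMono_nat_of_lt_succ fun m => ?_
  rw [supersetWeight, supersetWeight, sum_range_succ _ (m + 1)]
  refine lt_add_of_le_of_pos (sum_le_sum fun i _ => ?_) (by simpa using hc _)
  gcongr
  · exact (hc _).le
  · omega

theorem supersetWeight_pos (m : ℕ) : 0 < supersetWeight c n m := by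
  calc 0 < supersetWeight c n 0 := by simpa [supersetWeight] using hc n
    _ ≤ supersetWeight c n m := (supersetWeight_strictMono hc n).monotone m.zero_le

theorem lt_supersetWeight {k : ℕ} (hk : 1 ≤ k) : c (n - 1) < supersetWeight c n k := by
  calc c (n - 1) < supersetWeight c n 1 := by
        simpa [supersetWeight, sum_range_succ] using hc n
    _ ≤ supersetWeight c n k := (supersetWeight_strictMono hc n).monotone hk

end SupersetWeight

section ShapEvaluation

variable {n : ℕ} {M : (Fin (n + 2) → Bool) → Bool} {c : ℕ → ℝ}

theorem shap_zero_eq_neg_sum (hM : ∀ e, M e = true → e 0 = true)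
    (hc : ∀ j, c j = (j.factorial * (n + 1 - j).factorial : ℝ) / (n + 2).factorial)
    (p : Fin (n + 2) → ℝ) :
    Shap M (fun _ => false) 0 p = -∑ T : Finset (Fin n),
      (c T.card * phi M (fun _ => false) (T.map (nodeEmb n)) p
        + c (T.card + 1)
          * phi M (fun _ => false) (insert (Fin.last (n + 1)) (T.map (nodeEmb n))) p) := by
  have hzero : ∀ S, phi M (fun _ => false) (insert 0 S) p = 0 := fun S =>
    phi_eq_zero M _ _ p fun e' he' => by
      by_contra h
      simpa [he' 0 (mem_insert_self 0 S)] using hM e' (Bool.not_eq_false _ |>.mp h)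
  have hcoef : ∀ j, (j.factorial * (n + 2 - j - 1).factorial : ℝ) / (n + 2).factorial = c j :=
    fun j => by rw [hc, show n + 2 - j - 1 = n + 1 - j by omega]
  simp only [Shap, hzero, zero_sub, mul_neg, hcoef, sum_neg_distrib]
  rw [compl_singleton_zero_eq, sum_powerset_insert (last_notMem_map_nodeEmb _), sum_powerset_map,
    sum_powerset_map, powerset_univ, ← sum_add_distrib]
  simp [card_insert_of_notMem (last_notMem_map_nodeEmb _)]

variable {ε : ℝ} {D : Finset (Fin n)} {p : Fin (n + 2) → ℝ}

theorem phi_insert_last_map_nodeEmb (hp : IsRegionVertex ε D p) {e : Fin (n + 2) → Bool}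
    (he : ∀ v, e (nodeFeature v) = false) (T : Finset (Fin n)) :
    phi M e (insert (Fin.last (n + 1)) (T.map (nodeEmb n))) p
      = if M (entityOf (D \ T) (e (Fin.last (n + 1)))) then 1 else 0 := by
  rw [phi_eq_ite_of_forall_notMem M e (entityOf D true)]
  · congr 3
    rw [funext_iff, forall_features_iff]
    refine ⟨?_, ?_, fun v => ?_⟩
    · have h0 : (0 : Fin (n + 2)) ∉ insert (Fin.last (n + 1)) (T.map (nodeEmb n)) := by
        rw [mem_insert]
        exact not_or.2 ⟨Fin.last_pos.ne, zero_notMem_map_nodeEmb T⟩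
      rw [piecewise_eq_of_notMem _ _ _ h0, entityOf_zero, entityOf_zero]
    · rw [piecewise_eq_of_mem _ _ _ (mem_insert_self _ _), entityOf_last]
    · by_cases hv : v ∈ T
      · rw [piecewise_eq_of_mem _ _ _ (mem_insert_of_mem (nodeFeature_mem_map_nodeEmb.2 hv)), he,
          entityOf_nodeFeature]
        simp [hv]
      · have hv' : nodeFeature v ∉ insert (Fin.last (n + 1)) (T.map (nodeEmb n)) := by
          rw [mem_insert, nodeFeature_mem_map_nodeEmb]
          exact not_or.2 ⟨nodeFeature_ne_last v, hv⟩
        rw [piecewise_eq_of_notMem _ _ _ hv', entityOf_nodeFeature, entityOf_nodeFeature]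
        simp [hv]
  · intro i
    revert i
    rw [forall_features_iff]
    refine ⟨fun _ => by rw [hp.zero, entityOf_zero, if_pos rfl],
      fun h => (h (mem_insert_self _ _)).elim, fun v _ => ?_⟩
    simp only [entityOf_nodeFeature, hp.node, decide_eq_true_eq]

theorem phi_map_nodeEmb (hp : IsRegionVertex ε D p) (T : Finset (Fin n)) :
    phi M (fun _ => false) (T.map (nodeEmb n)) p
      = ε * (if M (entityOf (D \ T) true) then 1 else 0)
        + (1 - ε) * (if M (entityOf (D \ T) false) then 1 else 0) := by
  have he : ∀ b v, update (fun _ => false) (Fin.last (n + 1)) b (nodeFeature v) = false :=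
    fun b v => update_of_ne (nodeFeature_ne_last v) _ _
  rw [phi_eq_add_of_notMem M _ p (last_notMem_map_nodeEmb T), hp.last,
    phi_insert_last_map_nodeEmb hp (he true), phi_insert_last_map_nodeEmb hp (he false),
    update_self, update_self]

end ShapEvaluation

section Reduction

variable {n : ℕ} {G : SimpleGraph (Fin n)} {M : (Fin (n + 2) → Bool) → Bool} {c : ℕ → ℝ} {ε : ℝ}
  {D : Finset (Fin n)} {p : Fin (n + 2) → ℝ}

open Classical in
theorem IsVertexCoverClassifier.shap_eq (hM : IsVertexCoverClassifier G M)
    (hc : ∀ j, c j = (j.factorial * (n + 1 - j).factorial : ℝ) / (n + 2).factorial)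
    (hp : IsRegionVertex ε D p) :
    Shap M (fun _ => false) 0 p = -(ε * supersetWeight c n Dᶜ.card
      + ∑ T : Finset (Fin n), if ∃ u v, G.Adj u v ∧ D \ T = {u, v}
          then c T.card * (1 - ε) + c (T.card + 1) else 0) := by
  have hsupersets := sum_ite_subset_eq_supersetWeight c D
  rw [Fintype.card_fin] at hsupersets
  rw [shap_zero_eq_neg_sum (fun _ => hM.apply_zero_of_apply) hc, ← hsupersets, mul_sum,
    ← sum_add_distrib]
  congr 1
  refine sum_congr rfl fun T _ => ?_
  rw [phi_map_nodeEmb hp, phi_insert_last_map_nodeEmb hp (fun _ => rfl)]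
  simp only [hM.apply_entityOf_true, hM.apply_entityOf_false, sdiff_eq_empty_iff_subset]
  split_ifs <;> ring

theorem IsVertexCoverClassifier.shap_eq_of_forall_adj (hM : IsVertexCoverClassifier G M)
    (hc : ∀ j, c j = (j.factorial * (n + 1 - j).factorial : ℝ) / (n + 2).factorial)
    (hp : IsRegionVertex ε D p)
    (hD : ∀ u v, G.Adj u v → u ∉ D ∨ v ∉ D) :
    Shap M (fun _ => false) 0 p = -(ε * supersetWeight c n Dᶜ.card) := by
  rw [hM.shap_eq hc hp, sum_eq_zero fun T _ => if_neg ?_, add_zero]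
  rintro ⟨u, v, huv, hT⟩
  have hu : u ∈ D \ T := hT ▸ mem_insert_self u {v}
  have hv : v ∈ D \ T := hT ▸ mem_insert_of_mem (mem_singleton_self v)
  exact (hD u v huv).elim (· (mem_sdiff.1 hu).1) (· (mem_sdiff.1 hv).1)

theorem IsVertexCoverClassifier.shap_lt_of_adj (hM : IsVertexCoverClassifier G M)
    (hc : ∀ j, c j = (j.factorial * (n + 1 - j).factorial : ℝ) / (n + 2).factorial)
    (hp : IsRegionVertex ε D p)
    (hε0 : 0 < ε) (hε1 : ε ≤ 1) {u v : Fin n} (huv : G.Adj u v) (hu : u ∈ D) (hv : v ∈ D) :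
    Shap M (fun _ => false) 0 p < -c (n - 1) := by
  have hcpos : ∀ j, 0 < c j := fun j => by rw [hc]; positivity
  have hcard : ({u, v}ᶜ : Finset (Fin n)).card + 1 = n - 1 := by
    have := card_compl_add_card ({u, v} : Finset (Fin n))
    rw [card_pair huv.ne, Fintype.card_fin] at this
    omega
  have hedge : ∃ a b, G.Adj a b ∧ D \ {u, v}ᶜ = {a, b} :=
    ⟨u, v, huv, by
      ext z
      simp only [mem_sdiff, mem_compl, not_not, mem_insert, mem_singleton]
      grind⟩
  classical
  have hterm := single_le_sum (f := fun T : Finset (Fin n) => if ∃ a b, G.Adj a b ∧ D \ T = {a, b}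
      then c T.card * (1 - ε) + c (T.card + 1) else 0)
    (fun T _ => by
      split_ifs
      · have := hcpos T.card; have := hcpos (T.card + 1); nlinarith
      · exact le_rfl) (mem_univ {u, v}ᶜ)
  simp only [if_pos hedge, hcard] at hterm
  have := mul_pos hε0 (supersetWeight_pos hcpos n Dᶜ.card)
  have := mul_nonneg (hcpos ({u, v}ᶜ : Finset (Fin n)).card).le (sub_nonneg.2 hε1)
  rw [hM.shap_eq hc hp]
  linarith

end Reduction

theorem vertex_cover_iff_region_max_shap_general
    (n : ℕ)
    (G : SimpleGraph (Fin n)) (k : ℕ) (hk1 : 1 ≤ k)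
    (M : (Fin (n + 2) → Bool) → Bool)
    (hM : ∀ e : Fin (n + 2) → Bool, M e = true ↔
      ((∃ u v : Fin n, G.Adj u v ∧
          e 0 = true ∧ e (nodeFeature u) = true ∧ e (nodeFeature v) = true ∧
          ∀ j : Fin (n + 2),
            j ≠ 0 → j ≠ nodeFeature u → j ≠ nodeFeature v → e j = false) ∨
       (e 0 = true ∧ e (Fin.last (n + 1)) = true ∧
          ∀ v : Fin n, e (nodeFeature v) = false)))
    (c : ℕ → ℝ)
    (hc : ∀ j, c j = (j.factorial * (n + 1 - j).factorial : ℝ) / (n + 2).factorial)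
    (ε q : ℝ)
    (hε : ε = c (n - 1) / (∑ i ∈ Finset.range (k + 1), (k.choose i : ℝ) * c (n - i)))
    (hq : q = - c (n - 1)) :
    (∃ C : Finset (Fin n), C.card ≤ k ∧ ∀ u v : Fin n, G.Adj u v → u ∈ C ∨ v ∈ C)
      ↔ ∃ p : Fin (n + 2) → ℝ,
          (p 0 = 1 ∧ p (Fin.last (n + 1)) = ε ∧
            ∀ v : Fin n, 0 ≤ p (nodeFeature v) ∧ p (nodeFeature v) ≤ 1) ∧
          Shap M (fun _ => false) 0 p ≥ q := by
  have hM : IsVertexCoverClassifier G M := hM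
  have hcpos : ∀ j, 0 < c j := fun j => by rw [hc]; positivity
  have hF := supersetWeight_pos hcpos n k
  have hε0 : 0 < ε := hε ▸ div_pos (hcpos _) hF
  have hε1 : ε ≤ 1 := hε ▸ (div_le_one hF).2 (lt_supersetWeight hcpos n hk1).le
  have hεF : ε * supersetWeight c n k = c (n - 1) := hε ▸ div_mul_cancel₀ _ hF.ne'
  have hmono := supersetWeight_strictMono hcpos n
  subst hq
  constructor
  · rintro ⟨C, hCk, hC⟩
    obtain ⟨p, hp⟩ := exists_isRegionVertex ε Cᶜ
    refine ⟨p, ⟨hp.zero, hp.last, fun v => by rw [hp.node]; split_ifs <;> norm_num⟩, ?_⟩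
    rw [ge_iff_le, hM.shap_eq_of_forall_adj hc hp (by simpa using hC), compl_compl,
      neg_le_neg_iff, ← hεF]
    exact mul_le_mul_of_nonneg_left (hmono.monotone hCk) hε0.le
  · rintro ⟨p, ⟨hp0, hpw, hpbox⟩, hpq⟩
    obtain ⟨D, p', hp', hpp'⟩ := (isMultiaffine_shap M _ 0).exists_isRegionVertex_le hp0 hpw hpbox
    by_cases hD : ∀ u v, G.Adj u v → u ∉ D ∨ v ∉ D
    · refine ⟨Dᶜ, hmono.le_iff_le.1 (le_of_mul_le_mul_left ?_ hε0), by simpa using hD⟩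
      linarith [hM.shap_eq_of_forall_adj hc hp' hD]
    · push Not at hD
      obtain ⟨u, v, huv, hu, hv⟩ := hD
      linarith [hM.shap_lt_of_adj hc hp' hε0 hε1 huv hu hv]

theorem vertex_cover_iff_region_max_shap
    (n : ℕ) (hn : 1 ≤ n)
    (G : SimpleGraph (Fin n)) (k : ℕ) (hk1 : 1 ≤ k) (hkn : k ≤ n)
    (M : (Fin (n + 2) → Bool) → Bool)
    (hM : ∀ e : Fin (n + 2) → Bool, M e = true ↔
      ((∃ u v : Fin n, G.Adj u v ∧
          e 0 = true ∧ e (nodeFeature u) = true ∧ e (nodeFeature v) = true ∧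
          ∀ j : Fin (n + 2),
            j ≠ 0 → j ≠ nodeFeature u → j ≠ nodeFeature v → e j = false) ∨
       (e 0 = true ∧ e (Fin.last (n + 1)) = true ∧
          ∀ v : Fin n, e (nodeFeature v) = false)))
    (c : ℕ → ℝ)
    (hc : ∀ j, c j = (j.factorial * (n + 1 - j).factorial : ℝ) / (n + 2).factorial)
    (ε q : ℝ)
    (hε : ε = c (n - 1) / (∑ i ∈ Finset.range (k + 1), (k.choose i : ℝ) * c (n - i)))
    (hq : q = - c (n - 1)) :
    (∃ C : Finset (Fin n), C.card ≤ k ∧ ∀ u v : Fin n, G.Adj u v → u ∈ C ∨ v ∈ C)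
      ↔ ∃ p : Fin (n + 2) → ℝ,
          (p 0 = 1 ∧ p (Fin.last (n + 1)) = ε ∧
            ∀ v : Fin n, 0 ≤ p (nodeFeature v) ∧ p (nodeFeature v) ≤ 1) ∧
          Shap M (fun _ => false) 0 p ≥ q :=
  vertex_cover_iff_region_max_shap_general n G k hk1 M hM c hc ε q hε hq
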